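/- arXiv:2509.18858 — 2 statements merged into one kernel-verified Lean document; each statement's English description precedes it below -/
import Mathlib

section
/- Let G be r₁-regular on n vertices and H be r₂-regular on m vertices. Then U_{L_{G×H}}(t) = e^{−i r₁ r₂ t} Σ_{μ ∈ Spec_A(G)} E_μ ⊗ U_{A_H}(−μt), where E_μ are the adjacency eigenprojectors of G. -/
/-!
Since `r₁ r₂ • 1` is central, `U_L(t) = e^{-i r₁ r₂ t} U_{A_G ⊗ A_H}(-t)`. Writing
`A_G = ∑ μ • E_μ` with complete orthogonal idempotents `E_μ`, the Kronecker product
`A_G ⊗ A_H = ∑ E_μ ⊗ (μ • A_H)` is block diagonal with respect to the `E_μ`: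
`(∑ E_μ ⊗ B_μ)^k = ∑ E_μ ⊗ B_μ^k`, so the exponential series splits into
`∑ E_μ ⊗ exp B_μ`.
-/

open Matrix Complex Kronecker

/-- transition matrix `U_M(t) = exp(-itM)` -/
noncomputable def U {V : Type*} [Fintype V] [DecidableEq V] (M : Matrix V V ℂ) (t : ℝ) :
    Matrix V V ℂ :=
  NormedSpace.exp ((-(Complex.I * (t : ℂ))) • M)

/-- standard basis vector -/
noncomputable def e {V : Type*} [DecidableEq V] (v : V) : V → ℂ := Pi.single v 1

/-- Kronecker product of vectors -/
def vecKron {α β : Type*} (u : α → ℂ) (v : β → ℂ) : α × β → ℂ := fun p => u p.1 * v p.2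

namespace Matrix

variable {ι l m n p α : Type*}

theorem sum_kronecker [NonUnitalNonAssocSemiring α] (s : Finset ι) (A : ι → Matrix l n α)
    (B : Matrix m p α) : (∑ i ∈ s, A i) ⊗ₖ B = ∑ i ∈ s, A i ⊗ₖ B := by
  ext
  simp [Matrix.sum_apply, Finset.sum_mul]

theorem exp_smul_one [Fintype l] [DecidableEq l] (a : ℂ) :
    NormedSpace.exp (a • (1 : Matrix l l ℂ)) = Complex.exp a • 1 := by
  rw [smul_one_eq_diagonal, smul_one_eq_diagonal, exp_diagonal, Pi.exp_def, Complex.exp_eq_exp_ℂ]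

end Matrix

namespace CompleteOrthogonalIdempotents

variable {ι l m α : Type*} [Fintype ι] [Fintype l] [DecidableEq l] [Fintype m] [DecidableEq m]

theorem sum_kronecker_pow [CommSemiring α] {E : ι → Matrix l l α}
    (hE : CompleteOrthogonalIdempotents E) (B : ι → Matrix m m α) (k : ℕ) :
    (∑ i, E i ⊗ₖ B i) ^ k = ∑ i, E i ⊗ₖ (B i ^ k) := by
  classical
  induction k with
  | zero =>
    simp only [pow_zero]
    rw [← one_kronecker_one, ← hE.complete, sum_kronecker]
  | succ k ih =>
    rw [pow_succ, ih, Finset.sum_mul_sum]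
    refine Finset.sum_congr rfl fun i _ => ?_
    rw [Fintype.sum_eq_single i fun j hj => ?_, ← mul_kronecker_mul, (hE.idem i).eq, pow_succ]
    rw [← mul_kronecker_mul, hE.ortho hj.symm, zero_kronecker]

open scoped Matrix.Norms.Operator in
theorem exp_sum_kronecker {𝕂 : Type*} [RCLike 𝕂] {E : ι → Matrix l l 𝕂}
    (hE : CompleteOrthogonalIdempotents E) (B : ι → Matrix m m 𝕂) :
    NormedSpace.exp (∑ i, E i ⊗ₖ B i) = ∑ i, E i ⊗ₖ NormedSpace.exp (B i) := by
  have hterm (i : ι) : HasSum (fun k : ℕ => (k.factorial⁻¹ : 𝕂) • (E i ⊗ₖ (B i ^ k)))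
      (E i ⊗ₖ NormedSpace.exp (B i)) := by
    have hφ := LinearMap.continuous_of_finiteDimensional
      (kroneckerBilinear (R := 𝕂) (n := m) (p := m) (E i))
    simp only [← kronecker_smul]
    exact (NormedSpace.exp_series_hasSum_exp' (𝕂 := 𝕂) (B i)).map _ hφ
  -- summed in the entrywise topology: no norm on the `l × m` matrices is needed
  rw [NormedSpace.exp_eq_tsum (𝕂 := 𝕂)]
  refine HasSum.tsum_eq ?_
  simpa only [hE.sum_kronecker_pow, Finset.smul_sum] using hasSum_sum fun i _ => hterm i

end CompleteOrthogonalIdempotents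

section Transition

variable {l m V : Type*} [Fintype l] [DecidableEq l] [Fintype m] [DecidableEq m]
  [Fintype V] [DecidableEq V]

theorem U_smul_one_sub (c : ℂ) (M : Matrix V V ℂ) (t : ℝ) :
    U (c • 1 - M) t = Complex.exp (-(I * c * t)) • U M (-t) := by
  have hsplit : (-(I * t)) • (c • 1 - M) = (-(I * c * t)) • 1 + (-(I * ((-t : ℝ) : ℂ))) • M := by
    rw [smul_sub, smul_smul, sub_eq_add_neg, ← neg_smul]
    push_cast
    ring_nf
  rw [U, U, hsplit, exp_add_of_commute _ _ ((Commute.one_left _).smul_left _), exp_smul_one,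
    smul_mul_assoc, one_mul]

theorem U_sum_smul_kronecker {ι : Type*} [Fintype ι] {E : ι → Matrix l l ℂ}
    (hE : CompleteOrthogonalIdempotents E) (μ : ι → ℝ) (B : Matrix m m ℂ) (t : ℝ) :
    U ((∑ i, (μ i : ℂ) • E i) ⊗ₖ B) t = ∑ i, E i ⊗ₖ U B (μ i * t) := by
  have hterm (i : ι) : (-(I * t)) • (((μ i : ℂ) • E i) ⊗ₖ B) =
      E i ⊗ₖ ((-(I * ((μ i * t : ℝ) : ℂ))) • B) := by
    rw [smul_kronecker, kronecker_smul, smul_smul]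
    push_cast
    ring_nf
  simp only [U, sum_kronecker, Finset.smul_sum, hterm, hE.exp_sum_kronecker]

end Transition

theorem stmt6_general {n m r₁ r₂ : ℕ} (G : SimpleGraph (Fin n)) [DecidableRel G.Adj]
    (H : SimpleGraph (Fin m)) [DecidableRel H.Adj]
    {ι : Type*} [Fintype ι] [DecidableEq ι]
    (μ : ι → ℝ) (E : ι → Matrix (Fin n) (Fin n) ℂ)
    (hsum : ∑ i, E i = 1)
    (horth : ∀ i j, E i * E j = if i = j then E i else 0)
    (hspec : G.adjMatrix ℂ = ∑ i, ((μ i : ℝ) : ℂ) • E i)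
    (t : ℝ) :
    U (((r₁ * r₂ : ℕ) : ℂ) • (1 : Matrix (Fin n × Fin m) (Fin n × Fin m) ℂ)
        - (G.adjMatrix ℂ) ⊗ₖ (H.adjMatrix ℂ)) t
      = Complex.exp (-(Complex.I * ((r₁ * r₂ : ℕ) : ℂ) * (t : ℂ))) •
          ∑ i, (E i) ⊗ₖ (U (H.adjMatrix ℂ) (-(μ i) * t)) := by
  have hE : CompleteOrthogonalIdempotents E := ⟨OrthogonalIdempotents.iff_mul_eq.mpr horth, hsum⟩
  simp only [U_smul_one_sub, hspec, U_sum_smul_kronecker hE, mul_neg, neg_mul]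

theorem stmt6 {n m r₁ r₂ : ℕ} (G : SimpleGraph (Fin n)) [DecidableRel G.Adj]
    (H : SimpleGraph (Fin m)) [DecidableRel H.Adj]
    (hG : G.IsRegularOfDegree r₁) (hH : H.IsRegularOfDegree r₂)
    {ι : Type*} [Fintype ι] [DecidableEq ι]
    (μ : ι → ℝ) (E : ι → Matrix (Fin n) (Fin n) ℂ)
    (hsum : ∑ i, E i = 1)
    (horth : ∀ i j, E i * E j = if i = j then E i else 0)
    (hspec : G.adjMatrix ℂ = ∑ i, ((μ i : ℝ) : ℂ) • E i)
    (t : ℝ) :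
    U (((r₁ * r₂ : ℕ) : ℂ) • (1 : Matrix (Fin n × Fin m) (Fin n × Fin m) ℂ)
        - (G.adjMatrix ℂ) ⊗ₖ (H.adjMatrix ℂ)) t
      = Complex.exp (-(Complex.I * ((r₁ * r₂ : ℕ) : ℂ) * (t : ℂ))) •
          ∑ i, (E i) ⊗ₖ (U (H.adjMatrix ℂ) (-(μ i) * t)) :=
  stmt6_general G H μ E hsum horth hspec t
end

section
/- The tensor product K_n × P_2 (n ≥ 3), with adjacency matrix A_{K_n} ⊗ A_{P_2}, has Laplacian perfect pair state transfer at time π/2: there is a unit complex number χ such that U_{L_{K_n × P_2}}(π/2)((e_a − e_b) ⊗ e_1) = χ (e_a − e_b) ⊗ e_0 for any two distinct vertices a, b of K_n, where e_0, e_1 index the two vertices of the path P_2. -/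
open Matrix Complex Kronecker

/-- adjacency matrix of the path P₂ on vertices {0, 1} -/
def AP2 : Matrix (Fin 2) (Fin 2) ℂ := !![0, 1; 1, 0]

open Real

/-!
On the space spanned by `v = u ⊗ e₁` and `w = u ⊗ e₀`, where `u = e_a - e_b` is an eigenvector of
`A_{K_n}` for the eigenvalue `-1`, the Laplacian acts by `L v = c v + w`, `L w = c w + v` with
`c = n - 1`. Hence `v ± w` are eigenvectors for `c ± 1`, and at time `π/2` the two phases
`exp(-iπ(c ± 1)/2)` differ by the sign `-1`, which carries `v` to a unimodular multiple of `w`.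
-/

lemma exp_mulVec_of_mulVec_eq_smul {V : Type*} [Fintype V] [DecidableEq V]
    {M : Matrix V V ℂ} {x : V → ℂ} {μ : ℂ} (h : M *ᵥ x = μ • x) :
    NormedSpace.exp M *ᵥ x = Complex.exp μ • x := by
  let : NormedRing (Matrix V V ℂ) := Matrix.linftyOpNormedRing
  let : NormedAlgebra ℂ (Matrix V V ℂ) := Matrix.linftyOpNormedAlgebra
  have hpow (k : ℕ) : M ^ k *ᵥ x = μ ^ k • x := by
    induction k with
    | zero => simp
    | succ k ih => rw [pow_succ, ← mulVec_mulVec, h, mulVec_smul, ih, smul_smul, pow_succ']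
  let applyTo : Matrix V V ℂ →L[ℂ] V → ℂ :=
    (LinearMap.applyₗ x ∘ₗ Matrix.toLin'.toLinearMap).toContinuousLinearMap
  have hM := (NormedSpace.exp_series_hasSum_exp' (𝕂 := ℂ) M).mapL applyTo
  have hμ := (Complex.exp_eq_exp_ℂ ▸ NormedSpace.exp_series_hasSum_exp' (𝕂 := ℂ) μ).smul_const x
  refine hM.unique (hμ.congr_fun fun k => ?_)
  change ((k.factorial : ℂ)⁻¹ • M ^ k) *ᵥ x = _
  rw [smul_mulVec, hpow, smul_assoc]

lemma U_mulVec_of_mulVec_eq_smul {V : Type*} [Fintype V] [DecidableEq V]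
    {L : Matrix V V ℂ} {x : V → ℂ} {μ : ℂ} (h : L *ᵥ x = μ • x) (t : ℝ) :
    U L t *ᵥ x = Complex.exp (-(I * t) * μ) • x := by
  rw [U, exp_mulVec_of_mulVec_eq_smul (by rw [smul_mulVec, h, smul_smul])]

lemma U_pi_div_two_mulVec_of_swap {V : Type*} [Fintype V] [DecidableEq V]
    {L : Matrix V V ℂ} {v w : V → ℂ} {c : ℂ}
    (hv : L *ᵥ v = c • v + w) (hw : L *ᵥ w = c • w + v) :
    U L (π / 2) *ᵥ v = Complex.exp (-(I * (π / 2 : ℝ)) * (c + 1)) • w := by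
  have hadd : L *ᵥ (v + w) = (c + 1) • (v + w) := by
    rw [mulVec_add, hv, hw]; module
  have hsub : L *ᵥ (v - w) = (c - 1) • (v - w) := by
    rw [mulVec_sub, hv, hw]; module
  have hphase : Complex.exp (-(I * (π / 2 : ℝ)) * (c - 1))
      = -Complex.exp (-(I * (π / 2 : ℝ)) * (c + 1)) := by
    rw [show -(I * (π / 2 : ℝ)) * (c - 1) = -(I * (π / 2 : ℝ)) * (c + 1) + π * I by
      push_cast; ring, Complex.exp_add, Complex.exp_pi_mul_I, mul_neg_one]
  have hsplit : v = (2⁻¹ : ℂ) • ((v + w) + (v - w)) := by module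
  rw [hsplit, mulVec_smul, mulVec_add, U_mulVec_of_mulVec_eq_smul hadd,
    U_mulVec_of_mulVec_eq_smul hsub, hphase]
  module

lemma kronecker_mulVec_vecKron {α β : Type*} [Fintype α] [Fintype β]
    (A : Matrix α α ℂ) (B : Matrix β β ℂ) (u : α → ℂ) (v : β → ℂ) :
    (A ⊗ₖ B) *ᵥ vecKron u v = vecKron (A *ᵥ u) (B *ᵥ v) := by
  funext p
  simp only [mulVec, dotProduct, vecKron, kroneckerMap_apply, Fintype.sum_prod_type,
    Finset.sum_mul_sum]
  exact Finset.sum_congr rfl fun k _ => Finset.sum_congr rfl fun l _ => by ring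

lemma smul_one_sub_kronecker_mulVec_vecKron {α β : Type*} [Fintype α] [Fintype β]
    [DecidableEq α] [DecidableEq β] (c : ℂ) {A : Matrix α α ℂ} (B : Matrix β β ℂ) {u : α → ℂ}
    (hu : A *ᵥ u = -u) (x : β → ℂ) :
    (c • (1 : Matrix (α × β) (α × β) ℂ) - A ⊗ₖ B) *ᵥ vecKron u x
      = c • vecKron u x + vecKron u (B *ᵥ x) := by
  rw [sub_mulVec, smul_mulVec, one_mulVec, kronecker_mulVec_vecKron, hu, sub_eq_add_neg]
  congr 1
  funext p
  simp [vecKron]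

lemma adjMatrix_top_mulVec_of_sum_eq_zero {V α : Type*} [Fintype V] [DecidableEq V] [Ring α]
    {u : V → α} (hu : ∑ j, u j = 0) :
    (⊤ : SimpleGraph V).adjMatrix α *ᵥ u = -u := by
  funext i
  simp only [SimpleGraph.adjMatrix_mulVec_apply, SimpleGraph.neighborFinset_top]
  rw [Pi.neg_apply, ← sub_eq_zero, sub_neg_eq_add, add_comm, ← Fintype.sum_eq_add_sum_compl, hu]

lemma sum_e_sub_e {V : Type*} [Fintype V] [DecidableEq V] (a b : V) : ∑ j, (e a - e b) j = 0 := by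
  simp [e, Finset.sum_sub_distrib]

lemma AP2_mulVec_e_one : AP2 *ᵥ e 1 = e 0 := by
  funext j; fin_cases j <;> simp [AP2, e]

lemma AP2_mulVec_e_zero : AP2 *ᵥ e 0 = e 1 := by
  funext j; fin_cases j <;> simp [AP2, e]

theorem stmt10_general (n : ℕ) (a b : Fin n) :
    ∃ χ : ℂ, ‖χ‖ = 1 ∧
      (U ((((n - 1) * 1 : ℕ) : ℂ) • (1 : Matrix (Fin n × Fin 2) (Fin n × Fin 2) ℂ)
            - ((⊤ : SimpleGraph (Fin n)).adjMatrix ℂ) ⊗ₖ AP2) (Real.pi / 2)) *ᵥ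
          vecKron (e a - e b) (e (1 : Fin 2))
        = χ • vecKron (e a - e b) (e (0 : Fin 2)) := by
  have hu := adjMatrix_top_mulVec_of_sum_eq_zero (α := ℂ) (sum_e_sub_e a b)
  have hL := smul_one_sub_kronecker_mulVec_vecKron (((n - 1) * 1 : ℕ) : ℂ) AP2 hu
  refine ⟨_, ?_, U_pi_div_two_mulVec_of_swap
    (by rw [hL, AP2_mulVec_e_one]) (by rw [hL, AP2_mulVec_e_zero])⟩
  simp [Complex.norm_exp]

theorem stmt10 (n : ℕ) (hn : 3 ≤ n) (a b : Fin n) (hab : a ≠ b) :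
    ∃ χ : ℂ, ‖χ‖ = 1 ∧
      (U ((((n - 1) * 1 : ℕ) : ℂ) • (1 : Matrix (Fin n × Fin 2) (Fin n × Fin 2) ℂ)
            - ((⊤ : SimpleGraph (Fin n)).adjMatrix ℂ) ⊗ₖ AP2) (Real.pi / 2)) *ᵥ
          vecKron (e a - e b) (e (1 : Fin 2))
        = χ • vecKron (e a - e b) (e (0 : Fin 2)) :=
  stmt10_general n a b
end
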